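/- arXiv:0804.3214 — 4 statements merged into one kernel-verified Lean document; each statement's English description precedes it below -/
import Mathlib

section
/- The maps T_d defined on the formal power series ring B = ℚ[[x_i : i ∈ I]] by T_d(x_j) = x_j · (1 + x^d)^{{d,j}} (continuously extended as algebra endomorphisms) are Poisson algebra automorphisms of B with respect to the Poisson bracket {x_i, x_j} = b_{ij} x_i x_j. -/
/- STATEMENT 4: The maps T_d defined on B = ℚ[[x_i : i ∈ I]] by
T_d(x_j) = x_j · (1 + x^d)^{{d,j}} (continuously extended as algebra endomorphisms) are
Poisson algebra automorphisms of B for the Poisson bracket {x_i, x_j} = b_{ij} x_i x_j,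
where b_{ij} = {i,j} is the skew-symmetrized Euler form of a quiver without oriented
cycles. -/

open scoped Classical

/-- The Euler form of a quiver with vertex set `I` and `a i j` arrows from `i` to `j`:
`⟨d,e⟩ = Σ_i d_i e_i - Σ_{α : i → j} d_i e_j`. -/
def eulerForm {I : Type*} [Fintype I] (a : I → I → ℕ) (d e : I →₀ ℕ) : ℤ :=
  ∑ i, (d i : ℤ) * (e i : ℤ) - ∑ i, ∑ j, (a i j : ℤ) * (d i : ℤ) * (e j : ℤ)

/-- The skew-symmetrization `{d,e} = ⟨d,e⟩ - ⟨e,d⟩`. -/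
def skewForm {I : Type*} [Fintype I] (a : I → I → ℕ) (d e : I →₀ ℕ) : ℤ :=
  eulerForm a d e - eulerForm a e d

/-- The Poisson bracket on `B = ℚ[[x_i : i ∈ I]]` determined (as a continuous
biderivation) by `{x_i, x_j} = b_{ij} x_i x_j`; on monomials, `{x^d, x^e} = {d,e} x^{d+e}`. -/
noncomputable def pbracket {I : Type*} [Fintype I] [DecidableEq I] (a : I → I → ℕ)
    (f g : MvPowerSeries I ℚ) : MvPowerSeries I ℚ :=
  fun c => ∑ p ∈ Finset.HasAntidiagonal.antidiagonal c,
    ((skewForm a p.1 p.2 : ℤ) : ℚ) * (MvPowerSeries.coeff p.1 f) * (MvPowerSeries.coeff p.2 g)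

/-!
Write `u = 1 + x^d` and `σ e = {d,e}`. The map `T_d` is the continuous linear extension of
`x^e ↦ x^e u^(σ e)`; it is multiplicative because `σ` is additive, and it fixes `u` because
`σ d = {d,d} = 0`, so the same construction with `-σ` inverts it. The bracket is a coefficientwise
bilinear operation `x^p, x^q ↦ {p,q} x^(p+q)`, so `T_d` preserves it once it does on monomials.
There the Leibniz rule gives `{x^p u^(σ p), x^q u^(σ q)} = {p,q} x^(p+q) u^(σ p + σ q)` plus
cross terms proportional to `{d,q}{p,d} - {d,p}{q,d}`, which vanishes by antisymmetry.
-/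

open Finset MvPowerSeries

section SkewForm

variable {I : Type*} [Fintype I] (a : I → I → ℕ)

lemma eulerForm_add_left (d e f : I →₀ ℕ) :
    eulerForm a (d + e) f = eulerForm a d f + eulerForm a e f := by
  simp only [eulerForm, Finsupp.add_apply, Nat.cast_add, add_mul, mul_add, sum_add_distrib]
  ring

lemma eulerForm_add_right (d e f : I →₀ ℕ) :
    eulerForm a d (e + f) = eulerForm a d e + eulerForm a d f := by
  simp only [eulerForm, Finsupp.add_apply, Nat.cast_add, mul_add, sum_add_distrib]
  ring

lemma skewForm_add_right (d e f : I →₀ ℕ) :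
    skewForm a d (e + f) = skewForm a d e + skewForm a d f := by
  simp only [skewForm, eulerForm_add_left, eulerForm_add_right]
  ring

lemma skewForm_swap (d e : I →₀ ℕ) : skewForm a e d = -skewForm a d e := by
  simp [skewForm]

lemma skewForm_self (d : I →₀ ℕ) : skewForm a d d = 0 := by
  simp [skewForm]

lemma skewForm_cast_add_right (p q r : I →₀ ℕ) :
    ((skewForm a p (q + r) : ℤ) : ℚ) = skewForm a p q + skewForm a p r := by
  rw [skewForm_add_right, Int.cast_add]

lemma skewForm_cast_swap (p q : I →₀ ℕ) : ((skewForm a q p : ℤ) : ℚ) = -skewForm a p q := by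
  rw [skewForm_swap, Int.cast_neg]

noncomputable def skewFormHom (d : I →₀ ℕ) : (I →₀ ℕ) →+ ℤ :=
  AddMonoidHom.mk' (skewForm a d) (skewForm_add_right a d)

@[simp]
lemma skewFormHom_apply (d e : I →₀ ℕ) : skewFormHom a d e = skewForm a d e := rfl

end SkewForm

section Reindex

variable {M : Type*} [AddCommMonoid M]

lemma sum_antidiagonal_sum_antidiagonal_assoc {A : Type*} [AddMonoid A] [HasAntidiagonal A] (c : A)
    (G : A → A → A → M) :
    ∑ x ∈ antidiagonal c, ∑ y ∈ antidiagonal x.1, G y.1 y.2 x.2 =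
      ∑ x ∈ antidiagonal c, ∑ y ∈ antidiagonal x.2, G x.1 y.1 y.2 := by
  rw [sum_sigma', sum_sigma']
  refine sum_nbij' (fun ⟨⟨_, r⟩, ⟨p, q⟩⟩ ↦ ⟨(p, q + r), (q, r)⟩)
    (fun ⟨⟨p, _⟩, ⟨q, r⟩⟩ ↦ ⟨(p + q, r), (p, q)⟩) ?_ ?_ ?_ ?_ ?_ <;>
    aesop (add simp [add_assoc])

lemma sum_Iic_sum_antidiagonal {I : Type*} [DecidableEq I] (c : I →₀ ℕ)
    (F : (I →₀ ℕ) → (I →₀ ℕ) → M)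
    (hF : ∀ p q, ¬ p + q ≤ c → F p q = 0) :
    ∑ e ∈ Iic c, ∑ x ∈ antidiagonal e, F x.1 x.2 = ∑ p ∈ Iic c, ∑ q ∈ Iic c, F p q := by
  rw [← sum_product', sum_sigma']
  refine sum_bij_ne_zero (fun x _ _ ↦ x.2) ?_ ?_ ?_ (fun _ _ _ ↦ rfl)
  · rintro ⟨e, p, q⟩ hx -
    simp only [mem_sigma, mem_Iic, HasAntidiagonal.mem_antidiagonal] at hx
    obtain ⟨hc, rfl⟩ := hx
    simp only [mem_product, mem_Iic]
    exact ⟨le_self_add.trans hc, le_add_self.trans hc⟩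
  · rintro ⟨e, x⟩ hx - ⟨e', x'⟩ hx' - rfl
    simp only [mem_sigma, HasAntidiagonal.mem_antidiagonal] at hx hx'
    rw [← hx.2, ← hx'.2]
  · rintro ⟨p, q⟩ - hpq
    refine ⟨⟨p + q, p, q⟩, ?_, hpq, rfl⟩
    simp only [mem_sigma, mem_Iic, HasAntidiagonal.mem_antidiagonal, and_true]
    by_contra h
    exact hpq (hF p q h)

end Reindex

namespace MvPowerSeries

section WeightedMul

variable {I R : Type*} [DecidableEq I] [CommSemiring R] (κ : (I →₀ ℕ) → (I →₀ ℕ) → R)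

noncomputable def weightedMul (f g : MvPowerSeries I R) : MvPowerSeries I R :=
  fun c => ∑ x ∈ antidiagonal c, κ x.1 x.2 * coeff x.1 f * coeff x.2 g

lemma coeff_weightedMul (f g : MvPowerSeries I R) (c : I →₀ ℕ) :
    coeff c (weightedMul κ f g) = ∑ x ∈ antidiagonal c, κ x.1 x.2 * coeff x.1 f * coeff x.2 g :=
  rfl

lemma weightedMul_one_eq_mul (f g : MvPowerSeries I R) : weightedMul 1 f g = f * g := by
  ext c
  simp [coeff_weightedMul, coeff_mul]

lemma weightedMul_add_right (f g h : MvPowerSeries I R) :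
    weightedMul κ f (g + h) = weightedMul κ f g + weightedMul κ f h := by
  ext c
  simp only [coeff_weightedMul, map_add, mul_add, sum_add_distrib]

lemma weightedMul_one_right (hκ : ∀ p, κ p 0 = 0) (f : MvPowerSeries I R) :
    weightedMul κ f 1 = 0 := by
  ext c
  refine sum_eq_zero fun x _ ↦ ?_
  rw [coeff_one]
  split_ifs with h <;> simp [h, hκ]

lemma weightedMul_monomial (p q : I →₀ ℕ) (r s : R) :
    weightedMul κ (monomial p r) (monomial q s) = monomial (p + q) (κ p q * r * s) := by
  ext c
  have hpq : ∀ x : (I →₀ ℕ) × (I →₀ ℕ), x.2 = q ∧ x.1 = p ↔ x = (p, q) := fun x ↦ by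
    rw [Prod.ext_iff, and_comm]
  simp only [coeff_weightedMul, coeff_monomial, mul_ite, mul_zero, ite_mul, zero_mul, ← ite_and,
    hpq]
  simp only [sum_ite_eq', HasAntidiagonal.mem_antidiagonal, eq_comm]

lemma coeff_mul_weightedMul (f g h : MvPowerSeries I R) (c : I →₀ ℕ) :
    coeff c (h * weightedMul κ f g) = ∑ x ∈ antidiagonal c, ∑ y ∈ antidiagonal x.2,
      κ x.1 y.1 * coeff x.1 f * coeff y.1 g * coeff y.2 h := by
  rw [mul_comm, coeff_mul, ← sum_antidiagonal_sum_antidiagonal_assoc c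
    (fun p q r ↦ κ p q * coeff p f * coeff q g * coeff r h)]
  simp only [coeff_weightedMul, sum_mul]

lemma weightedMul_mul_right (hκ : ∀ p q r, κ p (q + r) = κ p q + κ p r)
    (f g h : MvPowerSeries I R) :
    weightedMul κ f (g * h) = g * weightedMul κ f h + h * weightedMul κ f g := by
  ext c
  rw [map_add, coeff_mul_weightedMul, coeff_mul_weightedMul, ← sum_add_distrib]
  refine sum_congr rfl fun x _ ↦ ?_
  rw [coeff_mul, mul_sum, Finsupp.sum_antidiagonal_swap x.2
    (fun q r ↦ κ x.1 q * coeff x.1 f * coeff q h * coeff r g), ← sum_add_distrib]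
  refine sum_congr rfl fun y hy ↦ ?_
  rw [← HasAntidiagonal.mem_antidiagonal.mp hy, hκ]
  ring

section CommRing

variable {R : Type*} [CommRing R] {κ : (I →₀ ℕ) → (I →₀ ℕ) → R}

lemma weightedMul_swap (hκ : ∀ p q, κ q p = -κ p q) (f g : MvPowerSeries I R) :
    weightedMul κ g f = -weightedMul κ f g := by
  ext c
  rw [coeff_weightedMul, map_neg, coeff_weightedMul,
    ← Finsupp.sum_antidiagonal_swap c (fun p q ↦ κ q p * coeff q g * coeff p f),
    ← sum_neg_distrib]
  refine sum_congr rfl fun x _ ↦ ?_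
  rw [hκ]
  ring

lemma weightedMul_mul_left (hadd : ∀ p q r, κ p (q + r) = κ p q + κ p r)
    (hswap : ∀ p q, κ q p = -κ p q) (f g h : MvPowerSeries I R) :
    weightedMul κ (f * g) h = f * weightedMul κ g h + g * weightedMul κ f h := by
  rw [weightedMul_swap hswap, weightedMul_mul_right κ hadd, weightedMul_swap hswap g,
    weightedMul_swap hswap f]
  ring

/-- The power rule, multiplied through by `u` to avoid the exponent `n - 1`. -/
lemma mul_weightedMul_zpow (hadd : ∀ p q r, κ p (q + r) = κ p q + κ p r)
    (f : MvPowerSeries I R) (u : (MvPowerSeries I R)ˣ) (n : ℤ) :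
    ↑u * weightedMul κ f ↑(u ^ n) = n * ↑(u ^ n) * weightedMul κ f ↑u := by
  have hleibniz : ∀ k : ℤ, weightedMul κ f ↑(u ^ (k + 1)) =
      ↑(u ^ k) * weightedMul κ f ↑u + ↑u * weightedMul κ f ↑(u ^ k) := fun k ↦ by
    rw [zpow_add_one, Units.val_mul, weightedMul_mul_right κ hadd]
  induction n using Int.induction_on with
  | zero =>
    rw [zpow_zero, Units.val_one,
      weightedMul_one_right κ (fun p ↦ by simpa using hadd p 0 0)]
    simp
  | succ n ih =>
    rw [hleibniz, zpow_add_one, Units.val_mul]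
    push_cast at ih ⊢
    linear_combination (↑u : MvPowerSeries I R) * ih
  | pred n ih =>
    have h := hleibniz (-n - 1)
    rw [sub_add_cancel] at h
    have hsplit : (↑(u ^ (-n : ℤ)) : MvPowerSeries I R) = ↑(u ^ (-n - 1 : ℤ)) * ↑u := by
      rw [← Units.val_mul, ← zpow_add_one, sub_add_cancel]
    rw [h, hsplit] at ih
    refine (Units.mul_right_inj u).mp ?_
    push_cast at ih ⊢
    linear_combination ih

lemma weightedMul_zpow_zpow (hadd : ∀ p q r, κ p (q + r) = κ p q + κ p r)
    (hswap : ∀ p q, κ q p = -κ p q) (u : (MvPowerSeries I R)ˣ)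
    (hu : weightedMul κ (u : MvPowerSeries I R) u = 0) (m n : ℤ) :
    weightedMul κ (↑(u ^ m) : MvPowerSeries I R) ↑(u ^ n) = 0 := by
  have hm : ↑u * weightedMul κ (u : MvPowerSeries I R) ↑(u ^ m) = 0 := by
    rw [mul_weightedMul_zpow hadd, hu, mul_zero]
  refine (Units.mul_right_inj (u * u)).mp ?_
  rw [mul_zero, Units.val_mul, mul_assoc, mul_weightedMul_zpow hadd, weightedMul_swap hswap]
  linear_combination (-(n : MvPowerSeries I R) * ↑(u ^ n)) * hm

end CommRing

end WeightedMul

section ExtendMonomials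

variable {I R : Type*} [DecidableEq I] [CommSemiring R]

/-- The continuous linear map sending `x^e` to `m e`, meaningful when `x^e ∣ m e` for all `e`. -/
noncomputable def extendMonomials (m : (I →₀ ℕ) → MvPowerSeries I R) (f : MvPowerSeries I R) :
    MvPowerSeries I R :=
  fun c => ∑ e ∈ Iic c, coeff e f * coeff c (m e)

variable {m : (I →₀ ℕ) → MvPowerSeries I R}

lemma coeff_extendMonomials (f : MvPowerSeries I R) (c : I →₀ ℕ) :
    coeff c (extendMonomials m f) = ∑ e ∈ Iic c, coeff e f * coeff c (m e) :=
  rfl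

lemma coeff_extendMonomials_of_le (hm : ∀ e c, ¬ e ≤ c → coeff c (m e) = 0)
    (f : MvPowerSeries I R) {s c : I →₀ ℕ} (hs : s ≤ c) :
    coeff s (extendMonomials m f) = ∑ e ∈ Iic c, coeff e f * coeff s (m e) :=
  sum_subset (Iic_subset_Iic.mpr hs) fun e _ he ↦ by
    rw [hm e s (fun h ↦ he (mem_Iic.mpr h)), mul_zero]

lemma extendMonomials_add (f g : MvPowerSeries I R) :
    extendMonomials m (f + g) = extendMonomials m f + extendMonomials m g := by
  ext c
  simp only [coeff_extendMonomials, map_add, add_mul, sum_add_distrib]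

lemma extendMonomials_monomial (hm : ∀ e c, ¬ e ≤ c → coeff c (m e) = 0)
    (e : I →₀ ℕ) (r : R) : extendMonomials m (monomial e r) = r • m e := by
  ext c
  rw [coeff_extendMonomials, map_smul, smul_eq_mul]
  by_cases hec : e ≤ c
  · rw [sum_eq_single_of_mem e (mem_Iic.mpr hec) fun e' _ he' ↦ by simp [coeff_monomial, he'],
      coeff_monomial, if_pos rfl]
  · rw [hm e c hec, mul_zero]
    exact sum_eq_zero fun e' he' ↦ by
      rw [coeff_monomial]
      split_ifs with h
      · exact absurd (h ▸ mem_Iic.mp he') hec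
      · rw [zero_mul]

lemma coeff_extendMonomials_eq_finsum (hm : ∀ e c, ¬ e ≤ c → coeff c (m e) = 0)
    (f : MvPowerSeries I R) (c : I →₀ ℕ) :
    coeff c (extendMonomials m f) =
      ∑ᶠ e, coeff e f * coeff c (extendMonomials m (monomial e 1)) := by
  simp only [extendMonomials_monomial hm, one_smul]
  refine (finsum_eq_sum_of_support_subset _ fun e he ↦ ?_).symm
  rw [coe_Iic, Set.mem_Iic]
  by_contra h
  exact he (by simp only [hm e c h, mul_zero])

lemma extendMonomials_weightedMul (hm : ∀ e c, ¬ e ≤ c → coeff c (m e) = 0)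
    (κ : (I →₀ ℕ) → (I →₀ ℕ) → R)
    (hκ : ∀ p q, weightedMul κ (m p) (m q) = κ p q • m (p + q)) (f g : MvPowerSeries I R) :
    extendMonomials m (weightedMul κ f g) =
      weightedMul κ (extendMonomials m f) (extendMonomials m g) := by
  ext c
  have hterm : ∀ p q, κ p q * coeff p f * coeff q g * coeff c (m (p + q)) =
      ∑ x ∈ antidiagonal c, κ x.1 x.2 * (coeff p f * coeff x.1 (m p)) *
        (coeff q g * coeff x.2 (m q)) := fun p q ↦ by
    rw [show κ p q * coeff p f * coeff q g * coeff c (m (p + q)) =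
        coeff p f * coeff q g * coeff c (κ p q • m (p + q)) by rw [coeff_smul]; ring,
      ← hκ, coeff_weightedMul, mul_sum]
    exact sum_congr rfl fun x _ ↦ by ring
  calc coeff c (extendMonomials m (weightedMul κ f g))
      = ∑ p ∈ Iic c, ∑ q ∈ Iic c, κ p q * coeff p f * coeff q g * coeff c (m (p + q)) := by
        rw [coeff_extendMonomials, ← sum_Iic_sum_antidiagonal c _
          fun p q h ↦ by rw [hm _ _ h, mul_zero]]
        refine sum_congr rfl fun e _ ↦ ?_
        rw [coeff_weightedMul, sum_mul]
        exact sum_congr rfl fun x hx ↦ by rw [HasAntidiagonal.mem_antidiagonal.mp hx]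
    _ = ∑ x ∈ antidiagonal c, ∑ p ∈ Iic c, ∑ q ∈ Iic c, κ x.1 x.2 *
          (coeff p f * coeff x.1 (m p)) * (coeff q g * coeff x.2 (m q)) := by
        simp only [hterm]
        exact (sum_congr rfl fun p _ ↦ sum_comm).trans sum_comm
    _ = coeff c (weightedMul κ (extendMonomials m f) (extendMonomials m g)) := by
        rw [coeff_weightedMul]
        refine sum_congr rfl fun x hx ↦ ?_
        have hx := HasAntidiagonal.mem_antidiagonal.mp hx
        rw [coeff_extendMonomials_of_le hm f (hx ▸ le_self_add : x.1 ≤ c),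
          coeff_extendMonomials_of_le hm g (hx ▸ le_add_self : x.2 ≤ c), mul_assoc, sum_mul_sum,
          mul_sum]
        exact sum_congr rfl fun p _ ↦ by rw [mul_sum]; exact sum_congr rfl fun q _ ↦ by ring

lemma extendMonomials_extendMonomials (hm : ∀ e c, ¬ e ≤ c → coeff c (m e) = 0)
    {m' : (I →₀ ℕ) → MvPowerSeries I R} (h : ∀ e, extendMonomials m' (m e) = monomial e 1)
    (f : MvPowerSeries I R) : extendMonomials m' (extendMonomials m f) = f := by
  ext c
  calc coeff c (extendMonomials m' (extendMonomials m f))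
      = ∑ e ∈ Iic c, ∑ p ∈ Iic c, coeff p f * coeff e (m p) * coeff c (m' e) := by
        refine sum_congr rfl fun e he ↦ ?_
        rw [coeff_extendMonomials_of_le hm f (mem_Iic.mp he), sum_mul]
    _ = ∑ p ∈ Iic c, coeff p f * coeff c (extendMonomials m' (m p)) := by
        rw [sum_comm]
        simp only [coeff_extendMonomials, mul_sum, mul_assoc]
    _ = coeff c f := by
        simp only [h, coeff_monomial, mul_ite, mul_one, mul_zero]
        rw [sum_ite_eq, if_pos (mem_Iic.mpr le_rfl)]

end ExtendMonomials

section Twist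

variable {I R : Type*} [CommSemiring R] (u : (MvPowerSeries I R)ˣ) (σ : (I →₀ ℕ) →+ ℤ)

noncomputable def twistMonomial (e : I →₀ ℕ) : MvPowerSeries I R :=
  monomial e (1 : R) * (↑(u ^ σ e) : MvPowerSeries I R)

lemma coeff_twistMonomial_of_not_le {e c : I →₀ ℕ} (h : ¬ e ≤ c) :
    coeff c (twistMonomial u σ e) = 0 := by
  rw [twistMonomial, coeff_monomial_mul, if_neg h]

lemma twistMonomial_add (p q : I →₀ ℕ) :
    twistMonomial u σ (p + q) = twistMonomial u σ p * twistMonomial u σ q := by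
  rw [twistMonomial, twistMonomial, twistMonomial, map_add, zpow_add, Units.val_mul,
    mul_mul_mul_comm, monomial_mul_monomial, one_mul]

variable [DecidableEq I]

noncomputable def twist : MvPowerSeries I R →ₐ[R] MvPowerSeries I R where
  toFun := extendMonomials (twistMonomial u σ)
  map_one' := by
    rw [← monomial_zero_one,
      extendMonomials_monomial (fun _ _ ↦ coeff_twistMonomial_of_not_le u σ), one_smul,
      twistMonomial, map_zero, zpow_zero, Units.val_one, mul_one]
  map_mul' f g := by
    simp only [← weightedMul_one_eq_mul]
    refine extendMonomials_weightedMul (fun _ _ ↦ coeff_twistMonomial_of_not_le u σ) 1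
      (fun p q ↦ ?_) f g
    rw [weightedMul_one_eq_mul, Pi.one_apply, Pi.one_apply, one_smul, twistMonomial_add]
  map_zero' := by
    ext c
    simp [coeff_extendMonomials]
  map_add' := extendMonomials_add
  commutes' r := by
    change extendMonomials _ (algebraMap R _ r) = _
    rw [algebraMap_apply, Algebra.algebraMap_self, RingHom.id_apply, ← monomial_zero_eq_C_apply,
      extendMonomials_monomial (fun _ _ ↦ coeff_twistMonomial_of_not_le u σ), twistMonomial,
      map_zero, zpow_zero, Units.val_one, mul_one, ← map_smul, smul_eq_mul, mul_one]

lemma twist_apply (f : MvPowerSeries I R) : twist u σ f = extendMonomials (twistMonomial u σ) f :=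
  rfl

lemma twist_monomial (e : I →₀ ℕ) (r : R) :
    twist u σ (monomial e r) = r • twistMonomial u σ e :=
  extendMonomials_monomial (fun _ _ ↦ coeff_twistMonomial_of_not_le u σ) e r

variable {u σ} {d : I →₀ ℕ}

lemma twist_units_zpow (hu : (u : MvPowerSeries I R) = 1 + monomial d 1) (hσ : σ d = 0) (n : ℤ) :
    twist u σ ↑(u ^ n) = ↑(u ^ n) := by
  have hfix : Units.map (twist u σ).toMonoidHom u = u := by
    refine Units.ext ?_
    change twist u σ ↑u = ↑u
    rw [hu, map_add, map_one, twist_monomial, one_smul,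
      twistMonomial, hσ, zpow_zero, Units.val_one, mul_one]
  calc twist u σ ↑(u ^ n) = ↑(Units.map (twist u σ).toMonoidHom (u ^ n)) := rfl
    _ = ↑(u ^ n) := by rw [map_zpow, hfix]

lemma twist_neg_twist (hu : (u : MvPowerSeries I R) = 1 + monomial d 1) (hσ : σ d = 0)
    (f : MvPowerSeries I R) : twist u (-σ) (twist u σ f) = f :=
  extendMonomials_extendMonomials (fun _ _ ↦ coeff_twistMonomial_of_not_le u σ) (fun e ↦ by
    rw [← twist_apply, twistMonomial, map_mul, twist_monomial, one_smul,
      twist_units_zpow hu (by simp [hσ]), twistMonomial, mul_assoc,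
      ← Units.val_mul, ← zpow_add, AddMonoidHom.neg_apply, neg_add_cancel, zpow_zero,
      Units.val_one, mul_one]) f

noncomputable def twistEquiv (hu : (u : MvPowerSeries I R) = 1 + monomial d 1) (hσ : σ d = 0) :
    MvPowerSeries I R ≃ₐ[R] MvPowerSeries I R :=
  AlgEquiv.ofAlgHom (twist u σ) (twist u (-σ))
    (AlgHom.ext fun f ↦ (by
      simpa only [neg_neg] using twist_neg_twist hu (σ := -σ) (by simp [hσ]) f :
        twist u σ (twist u (-σ) f) = f))
    (AlgHom.ext fun f ↦ twist_neg_twist hu hσ f)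

end Twist

end MvPowerSeries

section Poisson

variable {I : Type*} [Fintype I] [DecidableEq I] (a : I → I → ℕ)

lemma pbracket_eq_weightedMul : pbracket a = weightedMul fun p q ↦ ((skewForm a p q : ℤ) : ℚ) :=
  rfl

lemma pbracket_swap (f g : MvPowerSeries I ℚ) : pbracket a g f = -pbracket a f g :=
  weightedMul_swap (κ := fun p q ↦ ((skewForm a p q : ℤ) : ℚ)) (skewForm_cast_swap a) f g

lemma pbracket_mul_right (f g h : MvPowerSeries I ℚ) :
    pbracket a f (g * h) = g * pbracket a f h + h * pbracket a f g :=
  weightedMul_mul_right (fun p q ↦ ((skewForm a p q : ℤ) : ℚ)) (skewForm_cast_add_right a) f g h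

lemma pbracket_mul_left (f g h : MvPowerSeries I ℚ) :
    pbracket a (f * g) h = f * pbracket a g h + g * pbracket a f h :=
  weightedMul_mul_left (κ := fun p q ↦ ((skewForm a p q : ℤ) : ℚ)) (skewForm_cast_add_right a)
    (skewForm_cast_swap a) f g h

lemma pbracket_monomial (p q : I →₀ ℕ) :
    pbracket a (monomial p 1) (monomial q 1) =
      (skewForm a p q : MvPowerSeries I ℚ) * (monomial p 1 * monomial q 1) := by
  rw [pbracket_eq_weightedMul, weightedMul_monomial, mul_one, mul_one, monomial_mul_monomial,
    mul_one, ← zsmul_eq_mul, ← map_zsmul, zsmul_one]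

lemma mul_pbracket_zpow (f : MvPowerSeries I ℚ) (u : (MvPowerSeries I ℚ)ˣ) (n : ℤ) :
    ↑u * pbracket a f ↑(u ^ n) = n * ↑(u ^ n) * pbracket a f ↑u :=
  mul_weightedMul_zpow (κ := fun p q ↦ ((skewForm a p q : ℤ) : ℚ)) (skewForm_cast_add_right a)
    f u n

variable {a} {u : (MvPowerSeries I ℚ)ˣ} {d : I →₀ ℕ}

lemma pbracket_unit_right (hu : (u : MvPowerSeries I ℚ) = 1 + monomial d 1)
    (f : MvPowerSeries I ℚ) : pbracket a f ↑u = pbracket a f (monomial d 1) := by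
  rw [hu, pbracket_eq_weightedMul, weightedMul_add_right,
    weightedMul_one_right _ fun p ↦ by rw [← skewFormHom_apply, map_zero, Int.cast_zero],
    zero_add]

lemma pbracket_unit_unit (hu : (u : MvPowerSeries I ℚ) = 1 + monomial d 1) :
    pbracket a (u : MvPowerSeries I ℚ) ↑u = 0 := by
  rw [pbracket_unit_right hu, pbracket_swap, pbracket_unit_right hu, pbracket_monomial,
    skewForm_self, Int.cast_zero, zero_mul, neg_zero]

lemma pbracket_twistMonomial (hu : (u : MvPowerSeries I ℚ) = 1 + monomial d 1) (p q : I →₀ ℕ) :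
    pbracket a (twistMonomial u (skewFormHom a d) p) (twistMonomial u (skewFormHom a d) q) =
      ((skewForm a p q : ℤ) : ℚ) • twistMonomial u (skewFormHom a d) (p + q) := by
  set σ := skewFormHom a d
  have hmonomial : ∀ e (n : ℤ), (u : MvPowerSeries I ℚ) * pbracket a (monomial e 1) ↑(u ^ n) =
      -((n : MvPowerSeries I ℚ) * (σ e : MvPowerSeries I ℚ)) * (↑(u ^ n) : MvPowerSeries I ℚ) *
        (monomial e 1 * monomial d 1) := fun e n ↦ by
    rw [mul_pbracket_zpow, pbracket_unit_right hu, pbracket_monomial, skewForm_swap,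
      skewFormHom_apply]
    push_cast
    ring
  have hunits : pbracket a (↑(u ^ σ p) : MvPowerSeries I ℚ) ↑(u ^ σ q) = 0 :=
    weightedMul_zpow_zpow (skewForm_cast_add_right a) (skewForm_cast_swap a) u
      (pbracket_unit_unit hu) _ _
  refine (Units.mul_right_inj u).mp ?_
  rw [twistMonomial_add, twistMonomial, twistMonomial, pbracket_mul_left, pbracket_mul_right,
    pbracket_mul_right, hunits, pbracket_swap a (monomial q 1), pbracket_monomial,
    Int.cast_smul_eq_zsmul, zsmul_eq_mul]
  linear_combination (-monomial p 1 * ↑(u ^ σ q)) * hmonomial q (σ p) +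
    (↑(u ^ σ p) * monomial q 1) * hmonomial p (σ q)

lemma twist_pbracket (hu : (u : MvPowerSeries I ℚ) = 1 + monomial d 1) (f g : MvPowerSeries I ℚ) :
    twist u (skewFormHom a d) (pbracket a f g) =
      pbracket a (twist u (skewFormHom a d) f) (twist u (skewFormHom a d) g) :=
  extendMonomials_weightedMul (fun _ _ ↦ coeff_twistMonomial_of_not_le u _)
    (fun p q ↦ ((skewForm a p q : ℤ) : ℚ)) (pbracket_twistMonomial hu) f g

end Poisson

theorem Td_is_poisson_automorphism_general
    {I : Type*} [Fintype I] [DecidableEq I] (a : I → I → ℕ)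
    (d : I →₀ ℕ) :
    ∃ (u : (MvPowerSeries I ℚ)ˣ) (T : MvPowerSeries I ℚ ≃ₐ[ℚ] MvPowerSeries I ℚ),
      -- u = 1 + x^d (in particular 1 + x^d is invertible, so (1+x^d)^n makes sense, n ∈ ℤ)
      (u : MvPowerSeries I ℚ) = 1 + MvPowerSeries.monomial d 1 ∧
      -- T is the continuous extension, i.e. it is determined coefficientwise by its
      -- (multiplicatively determined) values on monomials
      (∀ (f : MvPowerSeries I ℚ) (c : I →₀ ℕ),
        MvPowerSeries.coeff c (T f) = ∑ᶠ e : I →₀ ℕ,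
          (MvPowerSeries.coeff e f) *
            MvPowerSeries.coeff c (T (MvPowerSeries.monomial e 1))) ∧
      -- T_d(x^e) = x^e · (1 + x^d)^{{d,e}}; for e = j a coordinate vector this is
      -- exactly T_d(x_j) = x_j (1+x^d)^{{d,j}}
      (∀ e : I →₀ ℕ, T (MvPowerSeries.monomial e 1) =
        MvPowerSeries.monomial e 1 * ((u ^ (skewForm a d e) : (MvPowerSeries I ℚ)ˣ) :
          MvPowerSeries I ℚ)) ∧
      -- T is a Poisson automorphism
      (∀ f g, T (pbracket a f g) = pbracket a (T f) (T g)) := by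
  have hunit : IsUnit (1 + monomial d 1 : MvPowerSeries I ℚ) := by
    rw [isUnit_iff_constantCoeff, map_add, map_one, ← coeff_zero_eq_constantCoeff_apply,
      coeff_monomial, isUnit_iff_ne_zero]
    split_ifs <;> norm_num
  refine ⟨hunit.unit, twistEquiv hunit.unit_spec (skewForm_self a d), hunit.unit_spec,
    coeff_extendMonomials_eq_finsum fun _ _ ↦ coeff_twistMonomial_of_not_le _ _,
    fun e ↦ (twist_monomial _ _ e 1).trans (one_smul _ _),
    twist_pbracket hunit.unit_spec⟩

theorem Td_is_poisson_automorphism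
    {I : Type*} [Fintype I] [DecidableEq I] (a : I → I → ℕ)
    -- the quiver has no oriented cycles: vertices can be ordered (via an injection to ℕ)
    -- so that arrows strictly decrease the order
    (ord : I → ℕ) (hord : ∀ i j, a i j ≠ 0 → ord j < ord i)
    (d : I →₀ ℕ) (hd : d ≠ 0) :
    ∃ (u : (MvPowerSeries I ℚ)ˣ) (T : MvPowerSeries I ℚ ≃ₐ[ℚ] MvPowerSeries I ℚ),
      -- u = 1 + x^d (in particular 1 + x^d is invertible, so (1+x^d)^n makes sense, n ∈ ℤ)
      (u : MvPowerSeries I ℚ) = 1 + MvPowerSeries.monomial d 1 ∧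
      -- T is the continuous extension, i.e. it is determined coefficientwise by its
      -- (multiplicatively determined) values on monomials
      (∀ (f : MvPowerSeries I ℚ) (c : I →₀ ℕ),
        MvPowerSeries.coeff c (T f) = ∑ᶠ e : I →₀ ℕ,
          (MvPowerSeries.coeff e f) *
            MvPowerSeries.coeff c (T (MvPowerSeries.monomial e 1))) ∧
      -- T_d(x^e) = x^e · (1 + x^d)^{{d,e}}; for e = j a coordinate vector this is
      -- exactly T_d(x_j) = x_j (1+x^d)^{{d,j}}
      (∀ e : I →₀ ℕ, T (MvPowerSeries.monomial e 1) =
        MvPowerSeries.monomial e 1 * ((u ^ (skewForm a d e) : (MvPowerSeries I ℚ)ˣ) :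
          MvPowerSeries I ℚ)) ∧
      -- T is a Poisson automorphism
      (∀ f g, T (pbracket a f g) = pbracket a (T f) (T g)) :=
  Td_is_poisson_automorphism_general a d
end

section
/- In one variable with commutation relation t·t = q⁻¹ t², i.e. with t^m t^n = q^{-mn} t^{m+n}: the series E(t) = Σ_{n≥0} q^{-n²}/((1-q⁻¹)···(1-q⁻ⁿ)) t^n satisfies E(q^N t) E(t)⁻¹ = Σ_{n≥0} [N choose n]_q t^n for all integers N, where [N choose n]_q is the Gaussian binomial coefficient. -/
/- STATEMENT 11: In one variable with t^m t^n = q^{-mn} t^{m+n}: the series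
E(t) = Σ_{n≥0} q^{-n²}/((1-q⁻¹)···(1-q⁻ⁿ)) t^n satisfies
E(q^N t) E(t)⁻¹ = Σ_{n≥0} [N choose n]_q t^n for all integers N. -/

open scoped Classical

abbrev SkewPS (I S : Type*) := (I →₀ ℕ) → S

noncomputable def skewMul {I S : Type*} [Fintype I] [DecidableEq I] [CommRing S] (q : Sˣ)
    (E : (I →₀ ℕ) → (I →₀ ℕ) → ℤ) (P Q : SkewPS I S) : SkewPS I S :=
  fun f => ∑ p ∈ Finset.HasAntidiagonal.antidiagonal f, ((q ^ (-(E p.2 p.1)) : Sˣ) : S) * P p.1 * Q p.2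

noncomputable def tpow {I S : Type*} [CommRing S] (d : I →₀ ℕ) : SkewPS I S :=
  fun f => if f = d then 1 else 0

noncomputable def twist {I S : Type*} [CommRing S] (q : Sˣ) (η : (I →₀ ℕ) → ℤ)
    (P : SkewPS I S) : SkewPS I S :=
  fun d => ((q ^ η d : Sˣ) : S) * P d

noncomputable abbrev K := RatFunc ℚ

noncomputable def qK : Kˣ := Units.mk0 RatFunc.X RatFunc.X_ne_zero

/-- One variable: `t^m · t^n = q^{-mn} t^{m+n}`. -/
def mulForm : (PUnit →₀ ℕ) → (PUnit →₀ ℕ) → ℤ := fun d e =>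
  (d PUnit.unit : ℤ) * (e PUnit.unit : ℤ)

/-- The quantum dilogarithm series `E(t) = Σ_{n≥0} q^{-n²}/((1-q⁻¹)···(1-q⁻ⁿ)) t^n`. -/
noncomputable def Eseries : SkewPS PUnit K := fun f =>
  (qK : K) ^ (-(f PUnit.unit : ℤ) ^ 2) *
    (∏ j ∈ Finset.range (f PUnit.unit), (1 - (qK : K) ^ (-(j + 1 : ℤ))))⁻¹

/-- The Gaussian binomial coefficient `[N choose n]_q`. -/
noncomputable def qBinom (M : ℤ) (N : ℕ) : K :=
  (∏ j ∈ Finset.range N, ((qK : K) ^ (M - j) - 1)) *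
    (∏ j ∈ Finset.range N, ((qK : K) ^ (j + 1 : ℤ) - 1))⁻¹

/- Write `G_N(t) = Σₙ [N choose n]_q tⁿ`. It suffices to show `G_N(t) E(t) = E(q^N t)`:
multiplying on the right by `E(t)⁻¹` and using associativity of the twisted product gives the
claim. On the coefficient of `t^m` this reads `Σ_{a+b=m} q^{-ab} [N choose a]_q E_b = q^{Nm} E_m`.
For `N = 0` only `a = 0` contributes. Passing from `N` to `N + 1` multiplies the left side by
`q^m`: expand `[N+1 choose a+1]_q = q^{a+1} [N choose a+1]_q + [N choose a]_q`, and move the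
second part back onto `E` through the recurrence `(q^{b+1} - 1) E_{b+1} = q^{-b} E_b`. Since
`q^m ≠ 0`, the step also runs downwards, so the identity holds for all integers `N`. -/

open Finset

section SkewMul

variable {I S : Type*} [Fintype I] [DecidableEq I] [CommRing S] (q : Sˣ)
  {E : (I →₀ ℕ) → (I →₀ ℕ) → ℤ}

theorem skewMul_assoc (hE₁ : ∀ a b c, E (a + b) c = E a c + E b c)
    (hE₂ : ∀ a b c, E a (b + c) = E a b + E a c) (P Q R : SkewPS I S) :
    skewMul q E (skewMul q E P Q) R = skewMul q E P (skewMul q E Q R) := by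
  funext f
  simp only [skewMul, sum_mul, mul_sum, sum_sigma']
  refine sum_nbij' (fun ⟨⟨_, y⟩, ⟨u, v⟩⟩ ↦ ⟨(u, v + y), (v, y)⟩)
    (fun ⟨⟨u, _⟩, ⟨v, y⟩⟩ ↦ ⟨(u + v, y), (u, v)⟩) ?_ ?_ ?_ ?_ fun ⟨⟨x, y⟩, ⟨u, v⟩⟩ h ↦ ?_
  rotate_right
  · obtain rfl : u + v = x := HasAntidiagonal.mem_antidiagonal.1 (mem_sigma.1 h).2
    have hexp : q ^ (-E y (u + v)) * q ^ (-E v u) = q ^ (-E (v + y) u) * q ^ (-E y v) := by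
      rw [← zpow_add, ← zpow_add, hE₁, hE₂]
      ring_nf
    rw [Units.ext_iff, Units.val_mul, Units.val_mul] at hexp
    linear_combination (P u * Q v * R y) * hexp
  all_goals aesop (add simp [add_assoc])

theorem skewMul_tpow_zero (hE : ∀ a, E 0 a = 0) (P : SkewPS I S) :
    skewMul q E P (tpow 0) = P := by
  funext f
  rw [skewMul, sum_eq_single (f, 0)]
  · simp [tpow, hE]
  · rintro ⟨x, y⟩ h hne
    rw [HasAntidiagonal.mem_antidiagonal] at h
    have : y ≠ 0 := by rintro rfl; simp_all
    simp [tpow, this]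
  · simp

end SkewMul

theorem mulForm_add_left (a b c : PUnit →₀ ℕ) :
    mulForm (a + b) c = mulForm a c + mulForm b c := by
  simp [mulForm, add_mul]

theorem mulForm_add_right (a b c : PUnit →₀ ℕ) :
    mulForm a (b + c) = mulForm a b + mulForm a c := by
  simp [mulForm, mul_add]

theorem mulForm_zero_left (a : PUnit →₀ ℕ) : mulForm 0 a = 0 := by
  simp [mulForm]

theorem skewMul_mulForm_apply {S : Type*} [CommRing S] (q : Sˣ) (P Q : SkewPS PUnit S)
    (f : PUnit →₀ ℕ) :
    skewMul q mulForm P Q f = ∑ p ∈ antidiagonal (f PUnit.unit),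
      ((q ^ (-(p.2 * p.1 : ℤ)) : Sˣ) : S) * P (Finsupp.single PUnit.unit p.1) *
        Q (Finsupp.single PUnit.unit p.2) := by
  conv_lhs => rw [Finsupp.unique_single f]
  rw [skewMul, Finsupp.antidiagonal_single, sum_map]
  simp [mulForm]

local notation "𝐪" => (qK : K)

theorem qK_pow_ne_one {n : ℕ} (hn : n ≠ 0) : 𝐪 ^ n ≠ 1 := by
  intro h
  have : (Polynomial.X : Polynomial ℚ) ^ n = 1 :=
    RatFunc.algebraMap_injective ℚ (by simpa [qK] using h)
  simpa [hn] using congrArg Polynomial.natDegree this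

theorem qK_zpow_succ_sub_one_ne_zero (j : ℕ) : 𝐪 ^ (j + 1 : ℤ) - 1 ≠ 0 := by
  rw [sub_ne_zero, ← Nat.cast_succ, zpow_natCast]
  exact qK_pow_ne_one j.succ_ne_zero

theorem qBinom_zero_right (M : ℤ) : qBinom M 0 = 1 := by
  simp [qBinom]

theorem qBinom_zero_succ (n : ℕ) : qBinom 0 (n + 1) = 0 := by
  simp [qBinom, prod_range_succ']

theorem qBinom_succ_succ (M : ℤ) (n : ℕ) :
    qBinom (M + 1) (n + 1) = 𝐪 ^ (n + 1) * qBinom M (n + 1) + qBinom M n := by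
  have hden : ∏ j ∈ range n, (𝐪 ^ (j + 1 : ℤ) - 1) ≠ 0 :=
    prod_ne_zero_iff.2 fun j _ ↦ qK_zpow_succ_sub_one_ne_zero j
  have hpow : 𝐪 ^ (n + 1) * 𝐪 ^ (M - n) = 𝐪 ^ (M + 1) := by
    rw [← zpow_natCast, ← zpow_add₀ qK.ne_zero]; push_cast; ring_nf
  have hshift : ∀ j : ℕ, M + 1 - ((j + 1 : ℕ) : ℤ) = M - j := fun j ↦ by push_cast; ring
  simp only [qBinom, prod_range_succ' (fun j ↦ 𝐪 ^ (M + 1 - j) - 1), hshift, prod_range_succ,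
    Nat.cast_zero, sub_zero]
  have hcast : 𝐪 ^ (n + 1 : ℤ) = 𝐪 ^ (n + 1) := by norm_cast
  have hlast := qK_zpow_succ_sub_one_ne_zero n
  field_simp
  linear_combination (∏ j ∈ range n, (𝐪 ^ (M - j) - 1)) * (-hcast - hpow)

noncomputable def Ecoeff (n : ℕ) : K :=
  𝐪⁻¹ ^ (n ^ 2) * (∏ j ∈ range n, (1 - 𝐪⁻¹ ^ (j + 1)))⁻¹

theorem Eseries_apply (f : PUnit →₀ ℕ) : Eseries f = Ecoeff (f PUnit.unit) := by
  simp [Eseries, Ecoeff, zpow_neg, ← zpow_natCast]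

theorem Ecoeff_succ (n : ℕ) :
    (𝐪 ^ (n + 1) - 1) * Ecoeff (n + 1) = 𝐪⁻¹ ^ n * Ecoeff n := by
  have hfac : ∀ j : ℕ, 1 - 𝐪⁻¹ ^ (j + 1) ≠ 0 := fun j ↦ by
    rw [sub_ne_zero, ne_comm, inv_pow, inv_ne_one]; exact qK_pow_ne_one j.succ_ne_zero
  have hprod : ∏ j ∈ range n, (1 - 𝐪⁻¹ ^ (j + 1)) ≠ 0 := prod_ne_zero_iff.2 fun j _ ↦ hfac j
  have hlast := hfac n
  have hp : 𝐪⁻¹ ≠ 0 := inv_ne_zero qK.ne_zero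
  rw [Ecoeff, Ecoeff, prod_range_succ, ← inv_inv (𝐪 ^ (n + 1)), ← inv_pow]
  generalize 𝐪⁻¹ = p at *
  field_simp
  ring

noncomputable def qBinomMulECoeff (N : ℤ) (m : ℕ) : K :=
  ∑ p ∈ antidiagonal m, 𝐪⁻¹ ^ (p.2 * p.1) * qBinom N p.1 * Ecoeff p.2

theorem qBinomMulECoeff_add_one (N : ℤ) (m : ℕ) :
    qBinomMulECoeff (N + 1) m = 𝐪 ^ m * qBinomMulECoeff N m := by
  cases m with
  | zero => simp [qBinomMulECoeff, qBinom_zero_right]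
  | succ m =>
  have pascal : qBinomMulECoeff (N + 1) (m + 1) =
      ∑ p ∈ antidiagonal (m + 1), 𝐪 ^ p.1 * 𝐪⁻¹ ^ (p.2 * p.1) * qBinom N p.1 * Ecoeff p.2 +
      ∑ p ∈ antidiagonal m, 𝐪⁻¹ ^ (p.2 * (p.1 + 1)) * qBinom N p.1 * Ecoeff p.2 := by
    rw [qBinomMulECoeff, Nat.sum_antidiagonal_succ, Nat.sum_antidiagonal_succ, add_assoc,
      ← sum_add_distrib]
    simp only [qBinom_succ_succ, qBinom_zero_right, mul_zero, pow_zero, one_mul]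
    exact congrArg _ (sum_congr rfl fun p _ ↦ by ring)
  have shift : ∑ p ∈ antidiagonal m, 𝐪⁻¹ ^ (p.2 * (p.1 + 1)) * qBinom N p.1 * Ecoeff p.2 =
      ∑ p ∈ antidiagonal (m + 1),
        𝐪 ^ p.1 * 𝐪⁻¹ ^ (p.2 * p.1) * (𝐪 ^ p.2 - 1) * qBinom N p.1 * Ecoeff p.2 := by
    -- reindex `b ↦ b + 1` through `Ecoeff_succ`; the new `b = 0` term carries `𝐪 ^ 0 - 1 = 0`
    rw [Nat.sum_antidiagonal_succ']
    simp only [pow_zero, sub_self, mul_zero, zero_mul, zero_add]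
    refine sum_congr rfl fun ⟨a, b⟩ _ ↦ ?_
    have hcancel : 𝐪 ^ a * 𝐪⁻¹ ^ a = 1 := by rw [← mul_pow, mul_inv_cancel₀ qK.ne_zero, one_pow]
    linear_combination (-(𝐪 ^ a * 𝐪⁻¹ ^ ((b + 1) * a) * qBinom N a)) * Ecoeff_succ b
      - qBinom N a * Ecoeff b * 𝐪⁻¹ ^ (b * a + b) * hcancel
  rw [pascal, shift, ← sum_add_distrib, qBinomMulECoeff, mul_sum]
  refine sum_congr rfl fun p hp ↦ ?_
  rw [← mem_antidiagonal.1 hp, pow_add]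
  ring

theorem qBinomMulECoeff_zero_left (m : ℕ) : qBinomMulECoeff 0 m = Ecoeff m := by
  rw [qBinomMulECoeff, sum_eq_single_of_mem (0, m) (by simp)]
  · simp [qBinom_zero_right]
  · rintro ⟨_ | a, b⟩ hp hne
    · simp_all
    · simp [qBinom_zero_succ]

theorem qBinomMulECoeff_eq (N : ℤ) (m : ℕ) :
    qBinomMulECoeff N m = 𝐪 ^ (N * m) * Ecoeff m := by
  have hstep (i : ℤ) : 𝐪 ^ ((i + 1) * m) = 𝐪 ^ m * 𝐪 ^ (i * m) := by
    rw [← zpow_natCast, ← zpow_add₀ qK.ne_zero]; ring_nf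
  induction N using Int.induction_on with
  | zero => simp [qBinomMulECoeff_zero_left]
  | succ i ih => rw [qBinomMulECoeff_add_one, ih, hstep, mul_assoc]
  | pred i ih =>
    apply mul_left_cancel₀ (pow_ne_zero m qK.ne_zero)
    rw [← qBinomMulECoeff_add_one, sub_add_cancel, ih, ← mul_assoc, ← hstep, sub_add_cancel]

theorem qBinom_mul_Eseries (N : ℤ) :
    skewMul qK mulForm (fun f ↦ qBinom N (f PUnit.unit)) Eseries =
      twist qK (fun f ↦ N * (f PUnit.unit : ℤ)) Eseries := by
  funext f
  rw [skewMul_mulForm_apply, twist, Units.val_zpow_eq_zpow_val, Eseries_apply,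
    ← qBinomMulECoeff_eq, qBinomMulECoeff]
  simp [Eseries_apply, zpow_neg, ← zpow_natCast]

theorem E_twist_gives_gaussian_binomials_general
    (Einv : SkewPS PUnit K)
    (hinv : skewMul qK mulForm Eseries Einv = tpow 0)
    (N : ℤ) :
    skewMul qK mulForm (twist qK (fun f => N * (f PUnit.unit : ℤ)) Eseries) Einv =
      fun f => qBinom N (f PUnit.unit) := by
  rw [← qBinom_mul_Eseries, skewMul_assoc qK mulForm_add_left mulForm_add_right, hinv,
    skewMul_tpow_zero qK mulForm_zero_left]

theorem E_twist_gives_gaussian_binomials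
    (Einv : SkewPS PUnit K)
    (hinv : skewMul qK mulForm Eseries Einv = tpow 0)
    (hinv' : skewMul qK mulForm Einv Eseries = tpow 0)
    (N : ℤ) :
    skewMul qK mulForm (twist qK (fun f => N * (f PUnit.unit : ℤ)) Eseries) Einv =
      fun f => qBinom N (f PUnit.unit) :=
  E_twist_gives_gaussian_binomials_general Einv hinv N
end

section
/- In every representation M of a quiver Q over a field, with a fixed stability Θ and slope μ(d) = Θ(d)/dim(d), there exists a unique Harder-Narasimhan filtration 0 = M₀ ⊂ M₁ ⊂ ... ⊂ M_s = M such that each subquotient M_i/M_{i-1} is semistable and μ(M₁/M₀) > μ(M₂/M₁) > ... > μ(M_s/M_{s-1}). -/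
/- STATEMENT 17: Every representation M of a quiver Q over a field, with a fixed stability
Θ and slope μ(d) = Θ(d)/dim(d), has a unique Harder-Narasimhan filtration
0 = M₀ ⊂ M₁ ⊂ ... ⊂ M_s = M with semistable subquotients of strictly decreasing slope. -/

open scoped Classical

variable {k : Type*} [Field k] {I : Type*} [Fintype I]

/-- A subrepresentation of the representation `M` (given by linear maps for the arrows of
the quiver with `a i j` arrows from `i` to `j`): a tuple of subspaces stable under all
maps. -/
def IsSubrep {a : I → I → ℕ} {d : I → ℕ}
    (M : ∀ i j : I, Fin (a i j) → ((Fin (d i) → k) →ₗ[k] (Fin (d j) → k)))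
    (U : ∀ i : I, Submodule k (Fin (d i) → k)) : Prop :=
  ∀ (i j : I) (α : Fin (a i j)), (U i).map (M i j α) ≤ U j

/-- The dimension vector of the subquotient `W'/W`. -/
noncomputable def sqDim {d : I → ℕ} (W W' : ∀ i : I, Submodule k (Fin (d i) → k)) :
    I → ℕ := fun i => Module.finrank k (W' i) - Module.finrank k (W i)

/-- The slope `μ(n) = Θ(n)/dim n` of a dimension vector. -/
noncomputable def slopeV (Θ : I → ℚ) (n : I → ℕ) : ℚ :=
  (∑ i, Θ i * (n i : ℚ)) / (∑ i, (n i : ℚ))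

/-- Semistability of the subquotient `W'/W`: every nonzero subrepresentation
`U/W ⊆ W'/W` satisfies `μ(U/W) ≤ μ(W'/W)`. -/
def SemistableSq {a : I → I → ℕ} {d : I → ℕ} (Θ : I → ℚ)
    (M : ∀ i j : I, Fin (a i j) → ((Fin (d i) → k) →ₗ[k] (Fin (d j) → k)))
    (W W' : ∀ i : I, Submodule k (Fin (d i) → k)) : Prop :=
  ∀ U : ∀ i : I, Submodule k (Fin (d i) → k), IsSubrep M U →
    (∀ i, W i ≤ U i) → (∀ i, U i ≤ W' i) → sqDim W U ≠ 0 →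
    slopeV Θ (sqDim W U) ≤ slopeV Θ (sqDim W W')

/-- `(s, F)` is a Harder-Narasimhan filtration of `M`:
`0 = F 0 ⊂ F 1 ⊂ ... ⊂ F s = M` (constant beyond `s`), all terms subrepresentations,
with semistable subquotients of strictly decreasing slopes. -/
def IsHNFiltration {a : I → I → ℕ} {d : I → ℕ} (Θ : I → ℚ)
    (M : ∀ i j : I, Fin (a i j) → ((Fin (d i) → k) →ₗ[k] (Fin (d j) → k)))
    (p : ℕ × (ℕ → ∀ i : I, Submodule k (Fin (d i) → k))) : Prop :=
  (∀ i, p.2 0 i = ⊥) ∧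
  (∀ i, p.2 p.1 i = ⊤) ∧
  (∀ n, n ≥ p.1 → p.2 n = p.2 p.1) ∧
  (∀ n, IsSubrep M (p.2 n)) ∧
  (∀ n < p.1, ∀ i, p.2 n i ≤ p.2 (n + 1) i) ∧
  (∀ n < p.1, p.2 n ≠ p.2 (n + 1)) ∧
  (∀ n < p.1, SemistableSq Θ M (p.2 n) (p.2 (n + 1))) ∧
  (∀ n, n + 1 < p.1 →
    slopeV Θ (sqDim (p.2 (n + 1)) (p.2 (n + 2))) < slopeV Θ (sqDim (p.2 n) (p.2 (n + 1))))

/-!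
Subrepresentations form a modular lattice on which the degree `Θ(dim U)` and the rank
`∑ dim U_i` are additive along `⊔`/`⊓`. Comparing the slope of `U / W` with a number `c`
amounts to comparing `deg - c • rank` at `U` and `W`, and this function is again modular; hence
the join of two subobjects of `⊤ / W` of maximal slope has maximal slope, so there is a largest
one, the maximal destabilizing subobject. Iterating it from `⊥` gives an HN filtration.
Conversely each step of an HN filtration is the maximal destabilizing subobject over the previous
step, since the later semistable pieces have smaller slope; this gives uniqueness.
-/

structure SlopeData (L : Type*) [Lattice L] where
  deg : L → ℚ
  rank : L → ℕ
  deg_sup_add_deg_inf (a b : L) : deg (a ⊔ b) + deg (a ⊓ b) = deg a + deg b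
  rank_sup_add_rank_inf (a b : L) : rank (a ⊔ b) + rank (a ⊓ b) = rank a + rank b
  rank_strictMono : StrictMono rank

namespace SlopeData

variable {L : Type*} [Lattice L] (D : SlopeData L)

def slope (a b : L) : ℚ := (D.deg b - D.deg a) / ((D.rank b : ℚ) - D.rank a)

def twistedDeg (c : ℚ) (a : L) : ℚ := D.deg a - c * D.rank a

def IsSemistable (S : Sublattice L) (a b : L) : Prop :=
  ∀ V ∈ S, a < V → V ≤ b → D.slope a V ≤ D.slope a b

-- `U / W` is the maximal destabilizing subobject of `⊤ / W`.
structure IsMaxDestabilizing (S : Sublattice L) (W U : L) : Prop where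
  mem : U ∈ S
  lt : W < U
  slope_le : ∀ V ∈ S, W < V → D.slope W V ≤ D.slope W U
  le_of_slope_eq : ∀ V ∈ S, W < V → D.slope W V = D.slope W U → V ≤ U

structure IsHarderNarasimhan [BoundedOrder L] (S : Sublattice L) (s : ℕ) (F : ℕ → L) :
    Prop where
  mem : ∀ n, F n ∈ S
  zero : F 0 = ⊥
  eq_top : ∀ n, s ≤ n → F n = ⊤
  lt_succ : ∀ n < s, F n < F (n + 1)
  semistable : ∀ n < s, D.IsSemistable S (F n) (F (n + 1))
  slope_lt : ∀ n, n + 1 < s → D.slope (F (n + 1)) (F (n + 2)) < D.slope (F n) (F (n + 1))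

variable {D}

theorem twistedDeg_sup_add_twistedDeg_inf (c : ℚ) (a b : L) :
    D.twistedDeg c (a ⊔ b) + D.twistedDeg c (a ⊓ b) = D.twistedDeg c a + D.twistedDeg c b := by
  have hrank : (D.rank (a ⊔ b) : ℚ) + D.rank (a ⊓ b) = D.rank a + D.rank b := by
    exact_mod_cast D.rank_sup_add_rank_inf a b
  simp only [twistedDeg]
  linear_combination D.deg_sup_add_deg_inf a b - c * hrank

theorem rank_sub_rank_pos {a b : L} (h : a < b) : (0 : ℚ) < D.rank b - D.rank a := by
  rw [sub_pos]
  exact_mod_cast D.rank_strictMono h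

theorem slope_le_iff {a b : L} (h : a < b) {c : ℚ} :
    D.slope a b ≤ c ↔ D.twistedDeg c b ≤ D.twistedDeg c a := by
  rw [slope, div_le_iff₀ (rank_sub_rank_pos h), twistedDeg, twistedDeg]
  constructor <;> intro <;> linarith

theorem le_slope_iff {a b : L} (h : a < b) {c : ℚ} :
    c ≤ D.slope a b ↔ D.twistedDeg c a ≤ D.twistedDeg c b := by
  rw [slope, le_div_iff₀ (rank_sub_rank_pos h), twistedDeg, twistedDeg]
  constructor <;> intro <;> linarith

theorem slope_lt_iff {a b : L} (h : a < b) {c : ℚ} :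
    D.slope a b < c ↔ D.twistedDeg c b < D.twistedDeg c a := by
  simpa only [not_le] using (le_slope_iff h).not

theorem twistedDeg_slope {a b : L} (h : a < b) :
    D.twistedDeg (D.slope a b) b = D.twistedDeg (D.slope a b) a :=
  le_antisymm ((slope_le_iff h).1 le_rfl) ((le_slope_iff h).1 le_rfl)

section MaxDestabilizing

variable {S : Sublattice L} {W U U' : L}

theorem exists_isMaxDestabilizing [OrderTop L] (htop : ⊤ ∈ S)
    (hdeg : (Set.range D.deg).Finite) (hW : W < ⊤) : ∃ U, D.IsMaxDestabilizing S W U := by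
  let f : L → ℚ ×ₗ ℕ := fun V ↦ toLex (D.slope W V, D.rank V)
  have hfin : (f '' {V | V ∈ S ∧ W < V}).Finite := by
    refine ((hdeg.prod (Set.finite_Iic (D.rank ⊤))).image fun x : ℚ × ℕ ↦
      toLex ((x.1 - D.deg W) / ((x.2 : ℚ) - D.rank W), x.2)).subset ?_
    rintro _ ⟨V, -, rfl⟩
    exact ⟨(D.deg V, D.rank V), ⟨⟨V, rfl⟩, D.rank_strictMono.monotone le_top⟩, rfl⟩
  obtain ⟨U, ⟨hUS, hWU⟩, hUmax⟩ := Set.Finite.exists_maximalFor' f _ hfin ⟨⊤, htop, hW⟩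
  have hf : ∀ V ∈ S, W < V → f V ≤ f U := fun V hV hWV ↦
    (le_total (f V) (f U)).elim id (hUmax ⟨hV, hWV⟩)
  have hslope : ∀ V ∈ S, W < V → D.slope W V ≤ D.slope W U := fun V hV hWV ↦ by
    rcases Prod.Lex.toLex_le_toLex.1 (hf V hV hWV) with h | ⟨h, -⟩
    exacts [h.le, h.le]
  refine ⟨U, ⟨hUS, hWU, hslope, fun V hV hWV hVU ↦ ?_⟩⟩
  set c := D.slope W U
  -- By modularity `U ⊔ V` has slope at least `c` over `W`, so the maximality of `rank U`
  -- forces `U ⊔ V = U`.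
  have hWX : W < U ⊔ V := hWU.trans_le le_sup_left
  have hinf : D.twistedDeg c (U ⊓ V) ≤ D.twistedDeg c W := by
    rcases (le_inf hWU.le hWV.le).eq_or_lt with h | h
    · rw [← h]
    · exact (slope_le_iff h).1 (hslope _ (S.inf_mem hUS hV) h)
  have hcX : c ≤ D.slope W (U ⊔ V) := by
    have hV' : D.twistedDeg c V = D.twistedDeg c W := hVU ▸ twistedDeg_slope hWV
    rw [le_slope_iff hWX]
    linarith [twistedDeg_sup_add_twistedDeg_inf (D := D) c U V, twistedDeg_slope (D := D) hWU]
  have hrank : D.rank (U ⊔ V) ≤ D.rank U := by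
    rcases Prod.Lex.toLex_le_toLex.1 (hf _ (S.sup_mem hUS hV) hWX) with h | ⟨-, h⟩
    exacts [absurd h hcX.not_gt, h]
  have hUX : U = U ⊔ V := (le_sup_left.eq_or_lt).resolve_right fun h ↦
    (D.rank_strictMono h).not_ge hrank
  exact hUX ▸ le_sup_right

theorem IsMaxDestabilizing.unique (hU : D.IsMaxDestabilizing S W U)
    (hU' : D.IsMaxDestabilizing S W U') : U = U' := by
  have h := le_antisymm (hU.slope_le U' hU'.mem hU'.lt) (hU'.slope_le U hU.mem hU.lt)
  exact le_antisymm (hU'.le_of_slope_eq U hU.mem hU.lt h.symm)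
    (hU.le_of_slope_eq U' hU'.mem hU'.lt h)

theorem IsMaxDestabilizing.slope_lt (hU : D.IsMaxDestabilizing S W U)
    (hU' : D.IsMaxDestabilizing S U U') : D.slope U U' < D.slope W U := by
  by_contra! h
  have hWU' : W < U' := hU.lt.trans hU'.lt
  have hle : D.slope W U ≤ D.slope W U' := by
    rw [le_slope_iff hWU', ← twistedDeg_slope hU.lt]
    exact (le_slope_iff hU'.lt).1 h
  have := hU.le_of_slope_eq U' hU'.mem hWU' (le_antisymm (hU.slope_le U' hU'.mem hWU') hle)
  exact hU'.lt.not_ge this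

theorem IsMaxDestabilizing.isSemistable (hU : D.IsMaxDestabilizing S W U) :
    D.IsSemistable S W U :=
  fun V hV hWV _ ↦ hU.slope_le V hV hWV

end MaxDestabilizing

namespace IsHarderNarasimhan

variable [BoundedOrder L] {S : Sublattice L} {s t : ℕ} {F G : ℕ → L}

theorem monotone (hF : D.IsHarderNarasimhan S s F) : Monotone F := by
  refine monotone_nat_of_le_succ fun n ↦ ?_
  rcases lt_or_ge n s with h | h
  · exact (hF.lt_succ n h).le
  · rw [hF.eq_top n h, hF.eq_top (n + 1) (by omega)]

theorem eq_top_iff (hF : D.IsHarderNarasimhan S s F) {n : ℕ} : F n = ⊤ ↔ s ≤ n :=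
  ⟨fun h ↦ not_lt.1 fun hn ↦ (h ▸ hF.lt_succ n hn).not_ge le_top, hF.eq_top n⟩

theorem slope_lt_of_lt (hF : D.IsHarderNarasimhan S s F) {m n : ℕ} (hmn : m < n) (hn : n < s) :
    D.slope (F n) (F (n + 1)) < D.slope (F m) (F (m + 1)) := by
  induction n, hmn using Nat.le_induction with
  | base => exact hF.slope_lt m hn
  | succ n hmn ih => exact (hF.slope_lt n hn).trans (ih (by omega))

theorem isMaxDestabilizing (hF : D.IsHarderNarasimhan S s F) {n : ℕ} (hn : n < s) :
    D.IsMaxDestabilizing S (F n) (F (n + 1)) := by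
  set c := D.slope (F n) (F (n + 1))
  -- In the step to `F (j + 1)`, the part of `V` outside `F j` only lowers `deg - c • rank`:
  -- `(V ⊔ F j) / F j` lies in the semistable `F (j + 1) / F j`, whose slope is below `c`.
  have key : ∀ j, n + 1 ≤ j → ∀ V ∈ S, F n ≤ V → V ≤ F j →
      D.twistedDeg c V ≤ D.twistedDeg c (F n) ∧
        (D.twistedDeg c V = D.twistedDeg c (F n) → V ≤ F (n + 1)) := by
    intro j hj
    induction j, hj using Nat.le_induction with
    | base =>
      intro V hV hnV hVn
      rcases hnV.eq_or_lt with rfl | hlt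
      · exact ⟨le_rfl, fun _ ↦ hVn⟩
      · exact ⟨(slope_le_iff hlt).1 (hF.semistable n hn V hV hlt hVn), fun _ ↦ hVn⟩
    | succ j hj ih =>
      intro V hV hnV hVj
      by_cases hV' : V ≤ F j
      · exact ih V hV hnV hV'
      have hjs : j < s := not_le.1 fun h ↦ hV' (hF.eq_top j h ▸ le_top)
      have hjX : F j < V ⊔ F j := right_lt_sup.2 hV'
      have hX : D.twistedDeg c (V ⊔ F j) < D.twistedDeg c (F j) :=
        (slope_lt_iff hjX).1 <| (hF.semistable j hjs _ (S.sup_mem hV (hF.mem j)) hjX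
          (sup_le hVj (hF.monotone j.le_succ))).trans_lt (hF.slope_lt_of_lt hj hjs)
      have hY := (ih (V ⊓ F j) (S.inf_mem hV (hF.mem j))
        (le_inf hnV (hF.monotone (by omega))) inf_le_right).1
      have hlt : D.twistedDeg c V < D.twistedDeg c (F n) := by
        linarith [twistedDeg_sup_add_twistedDeg_inf (D := D) c V (F j)]
      exact ⟨hlt.le, fun h ↦ absurd h hlt.ne⟩
  have hVs : ∀ V, V ≤ F s := fun V ↦ hF.eq_top s le_rfl ▸ le_top
  refine ⟨hF.mem _, hF.lt_succ n hn, fun V hV hnV ↦ ?_, fun V hV hnV hVc ↦ ?_⟩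
  · exact (slope_le_iff hnV).2 (key s hn V hV hnV.le (hVs V)).1
  · refine (key s hn V hV hnV.le (hVs V)).2 ?_
    rw [show c = D.slope (F n) V from hVc.symm]
    exact twistedDeg_slope hnV

theorem unique (hF : D.IsHarderNarasimhan S s F) (hG : D.IsHarderNarasimhan S t G) :
    s = t ∧ F = G := by
  have hFG : F = G := by
    funext n
    induction n with
    | zero => rw [hF.zero, hG.zero]
    | succ n ih =>
      rcases lt_or_ge n s with hns | hns
      · have hnt : n < t := not_le.1 fun h ↦
          (hF.eq_top_iff.1 (ih.trans (hG.eq_top n h))).not_gt hns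
        exact (hF.isMaxDestabilizing hns).unique (ih ▸ hG.isMaxDestabilizing hnt)
      · have hnt : t ≤ n := hG.eq_top_iff.1 (ih ▸ hF.eq_top n hns)
        rw [hF.eq_top _ (by omega), hG.eq_top _ (by omega)]
  subst hFG
  exact ⟨le_antisymm (hF.eq_top_iff.1 (hG.eq_top t le_rfl)) (hG.eq_top_iff.1 (hF.eq_top s le_rfl)),
    rfl⟩

end IsHarderNarasimhan

section Existence

variable [BoundedOrder L] (D) (S : Sublattice L)

noncomputable def hnFiltration : ℕ → L
  | 0 => ⊥
  | n + 1 => if h : ∃ U, D.IsMaxDestabilizing S (hnFiltration n) U then h.choose else ⊤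

variable {D S}

theorem hnFiltration_succ_of_eq_top {n : ℕ} (h : D.hnFiltration S n = ⊤) :
    D.hnFiltration S (n + 1) = ⊤ := by
  rw [hnFiltration, dif_neg]
  rintro ⟨U, hU⟩
  exact not_top_lt (h ▸ hU.lt)

theorem hnFiltration_mem (hbot : ⊥ ∈ S) (htop : ⊤ ∈ S) (n : ℕ) : D.hnFiltration S n ∈ S := by
  cases n with
  | zero => exact hbot
  | succ n =>
    rw [hnFiltration]
    split_ifs with h
    exacts [h.choose_spec.mem, htop]

theorem isMaxDestabilizing_hnFiltration (htop : ⊤ ∈ S) (hdeg : (Set.range D.deg).Finite)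
    {n : ℕ} (hn : D.hnFiltration S n ≠ ⊤) :
    D.IsMaxDestabilizing S (D.hnFiltration S n) (D.hnFiltration S (n + 1)) := by
  have h := exists_isMaxDestabilizing htop hdeg (lt_top_iff_ne_top.2 hn)
  rw [hnFiltration, dif_pos h]
  exact h.choose_spec

theorem exists_hnFiltration_eq_top (htop : ⊤ ∈ S) (hdeg : (Set.range D.deg).Finite) :
    ∃ n, D.hnFiltration S n = ⊤ := by
  have h : ∀ n, D.hnFiltration S n = ⊤ ∨ n ≤ D.rank (D.hnFiltration S n) := by
    intro n
    induction n with
    | zero => exact .inr (Nat.zero_le _)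
    | succ n ih =>
      by_cases hn : D.hnFiltration S n = ⊤
      · exact .inl (hnFiltration_succ_of_eq_top hn)
      · have := D.rank_strictMono (isMaxDestabilizing_hnFiltration htop hdeg hn).lt
        have := ih.resolve_left hn
        exact .inr (by omega)
  refine ⟨D.rank ⊤ + 1, (h _).resolve_right fun hle ↦ ?_⟩
  have := D.rank_strictMono.monotone (le_top : D.hnFiltration S (D.rank ⊤ + 1) ≤ ⊤)
  omega

theorem isHarderNarasimhan_hnFiltration (hbot : ⊥ ∈ S) (htop : ⊤ ∈ S)
    (hdeg : (Set.range D.deg).Finite) :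
    D.IsHarderNarasimhan S (Nat.find (exists_hnFiltration_eq_top htop hdeg))
      (D.hnFiltration S) := by
  set s := Nat.find (exists_hnFiltration_eq_top htop hdeg)
  have hne : ∀ n < s, D.hnFiltration S n ≠ ⊤ := fun n hn ↦ Nat.find_min _ hn
  have hmax : ∀ n < s, D.IsMaxDestabilizing S (D.hnFiltration S n) (D.hnFiltration S (n + 1)) :=
    fun n hn ↦ isMaxDestabilizing_hnFiltration htop hdeg (hne n hn)
  refine ⟨hnFiltration_mem hbot htop, rfl, fun n hn ↦ ?_, fun n hn ↦ (hmax n hn).lt,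
    fun n hn ↦ (hmax n hn).isSemistable,
    fun n hn ↦ (hmax n (by omega)).slope_lt (hmax (n + 1) hn)⟩
  induction n, hn using Nat.le_induction with
  | base => exact Nat.find_spec (exists_hnFiltration_eq_top htop hdeg)
  | succ n _ ih => exact hnFiltration_succ_of_eq_top ih

theorem existsUnique_isHarderNarasimhan (hbot : ⊥ ∈ S) (htop : ⊤ ∈ S)
    (hdeg : (Set.range D.deg).Finite) :
    ∃! p : ℕ × (ℕ → L), D.IsHarderNarasimhan S p.1 p.2 :=
  ⟨(_, D.hnFiltration S), isHarderNarasimhan_hnFiltration hbot htop hdeg, fun _ hp ↦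
    Prod.ext_iff.2 (hp.unique (isHarderNarasimhan_hnFiltration hbot htop hdeg))⟩

end Existence

end SlopeData

open Module

section Quiver

variable {E : I → Type*} [∀ i, AddCommGroup (E i)] [∀ i, Module k (E i)]
  [∀ i, FiniteDimensional k (E i)]

variable (k E) in
noncomputable def finrankSlopeData (Θ : I → ℚ) : SlopeData (∀ i, Submodule k (E i)) where
  deg U := ∑ i, Θ i * finrank k (U i)
  rank U := ∑ i, finrank k (U i)
  deg_sup_add_deg_inf U U' := by
    simp only [← Finset.sum_add_distrib, ← mul_add]
    refine Finset.sum_congr rfl fun i _ ↦ ?_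
    exact_mod_cast congrArg (Θ i * ·)
      (congrArg (Nat.cast (R := ℚ)) (Submodule.finrank_sup_add_finrank_inf_eq (U i) (U' i)))
  rank_sup_add_rank_inf U U' := by
    simp only [← Finset.sum_add_distrib]
    exact Finset.sum_congr rfl fun i _ ↦ Submodule.finrank_sup_add_finrank_inf_eq (U i) (U' i)
  rank_strictMono U U' h := by
    obtain ⟨hle, i, hi⟩ := Pi.lt_def.1 h
    exact Finset.sum_lt_sum (fun j _ ↦ Submodule.finrank_mono (hle j))
      ⟨i, Finset.mem_univ _, Submodule.finrank_lt_finrank_of_lt hi⟩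

theorem finite_range_finrankSlopeData_deg (Θ : I → ℚ) :
    (Set.range (finrankSlopeData k E Θ).deg).Finite := by
  refine (Set.finite_range fun v : ∀ i, Fin (finrank k (E i) + 1) ↦
    ∑ i, Θ i * ((v i : ℕ) : ℚ)).subset ?_
  rintro _ ⟨U, rfl⟩
  exact ⟨fun i ↦ ⟨finrank k (U i), Nat.lt_succ_of_le (Submodule.finrank_le _)⟩, rfl⟩

end Quiver

section Subrep

variable {a : I → I → ℕ} {d : I → ℕ}

def subrepSublattice (M : ∀ i j : I, Fin (a i j) → ((Fin (d i) → k) →ₗ[k] (Fin (d j) → k))) :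
    Sublattice (∀ i, Submodule k (Fin (d i) → k)) where
  carrier := {U | IsSubrep M U}
  supClosed' U hU U' hU' i j α := by
    rw [Pi.sup_apply, Submodule.map_sup]
    exact sup_le_sup (hU i j α) (hU' i j α)
  infClosed' U hU U' hU' i j α :=
    (Submodule.map_inf_le _).trans (inf_le_inf (hU i j α) (hU' i j α))

variable {M : ∀ i j : I, Fin (a i j) → ((Fin (d i) → k) →ₗ[k] (Fin (d j) → k))}

theorem slopeV_sqDim (Θ : I → ℚ) {W U : ∀ i, Submodule k (Fin (d i) → k)} (h : W ≤ U) :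
    slopeV Θ (sqDim W U) = (finrankSlopeData k _ Θ).slope W U := by
  have hsub : ∀ i, ((sqDim W U i : ℕ) : ℚ) = finrank k (U i) - finrank k (W i) :=
    fun i ↦ Nat.cast_sub (Submodule.finrank_mono (h i))
  simp only [slopeV, SlopeData.slope, finrankSlopeData, hsub, mul_sub, Finset.sum_sub_distrib,
    Nat.cast_sum]

theorem semistableSq_iff (Θ : I → ℚ) {W W' : ∀ i, Submodule k (Fin (d i) → k)} (h : W ≤ W') :
    SemistableSq Θ M W W' ↔ (finrankSlopeData k _ Θ).IsSemistable (subrepSublattice M) W W' := by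
  refine forall_congr' fun U ↦ ⟨fun hU hUS hWU hUW' ↦ ?_, fun hU hUS hWU hUW' h0 ↦ ?_⟩
  · have h0 : sqDim W U ≠ 0 := fun h0 ↦ by
      obtain ⟨-, i, hi⟩ := Pi.lt_def.1 hWU
      have := Submodule.finrank_lt_finrank_of_lt hi
      have := congrFun h0 i
      simp only [sqDim, Pi.zero_apply] at this
      omega
    rw [← slopeV_sqDim Θ hWU.le, ← slopeV_sqDim Θ h]
    exact hU hUS hWU.le hUW' h0
  · have hWU' : W ≠ U := by
      rintro rfl
      exact h0 (funext fun i ↦ Nat.sub_self _)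
    rw [slopeV_sqDim Θ hWU, slopeV_sqDim Θ h]
    exact hU hUS (lt_of_le_of_ne hWU hWU') hUW'

theorem isHNFiltration_iff (Θ : I → ℚ) (p : ℕ × (ℕ → ∀ i, Submodule k (Fin (d i) → k))) :
    IsHNFiltration Θ M p ↔
      (finrankSlopeData k _ Θ).IsHarderNarasimhan (subrepSublattice M) p.1 p.2 := by
  obtain ⟨s, F⟩ := p
  constructor
  · rintro ⟨h0, hs, hconst, hsub, hle, hne, hss, hslope⟩
    refine ⟨hsub, funext h0, fun n hn ↦ (hconst n hn).trans (funext hs),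
      fun n hn ↦ lt_of_le_of_ne (hle n hn) (hne n hn),
      fun n hn ↦ (semistableSq_iff Θ (hle n hn)).1 (hss n hn), fun n hn ↦ ?_⟩
    rw [← slopeV_sqDim Θ (hle n (by omega)),
      ← slopeV_sqDim Θ (hle (n + 1) hn : F (n + 1) ≤ F (n + 2))]
    exact hslope n hn
  · intro hF
    have htop := hF.eq_top s le_rfl
    refine ⟨fun i ↦ congrFun hF.zero i, fun i ↦ congrFun htop i,
      fun n hn ↦ (hF.eq_top n hn).trans htop.symm, hF.mem, fun n hn ↦ (hF.lt_succ n hn).le,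
      fun n hn ↦ (hF.lt_succ n hn).ne, fun n hn ↦ (semistableSq_iff Θ (hF.lt_succ n hn).le).2
      (hF.semistable n hn), fun n hn ↦ ?_⟩
    rw [slopeV_sqDim Θ (hF.lt_succ n (by omega)).le,
      slopeV_sqDim Θ (hF.lt_succ (n + 1) hn).le]
    exact hF.slope_lt n hn

end Subrep

theorem harder_narasimhan_filtration_exists_unique
    (a : I → I → ℕ) (d : I → ℕ) (Θ : I → ℚ)
    (M : ∀ i j : I, Fin (a i j) → ((Fin (d i) → k) →ₗ[k] (Fin (d j) → k))) :
    ∃! p : ℕ × (ℕ → ∀ i : I, Submodule k (Fin (d i) → k)), IsHNFiltration Θ M p := by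
  simp only [isHNFiltration_iff]
  exact (finrankSlopeData k _ Θ).existsUnique_isHarderNarasimhan (fun _ _ _ ↦ by simp)
    (fun _ _ _ ↦ le_top) (finite_range_finrankSlopeData_deg Θ)
end

section
/- Let B₁ = ℚ[[x,y]] with Poisson bracket {x,y} = xy, and define Poisson automorphisms T_{a,b} for (a,b) ∈ ℕ² \ {0} by T_{a,b}(x) = x(1+x^a y^b)^{-b}, T_{a,b}(y) = y(1+x^a y^b)^{a}. Then T_{1,0} ∘ T_{0,1} = T_{0,1} ∘ T_{1,1} ∘ T_{1,0}. -/
/- STATEMENT 18: Let B₁ = ℚ[[x,y]] with Poisson bracket {x,y} = xy, and define the Poisson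
automorphisms T_{a,b} by T_{a,b}(x) = x(1+x^a y^b)^{-b}, T_{a,b}(y) = y(1+x^a y^b)^{a},
extended continuously. Then T_{1,0} ∘ T_{0,1} = T_{0,1} ∘ T_{1,1} ∘ T_{1,0}. -/

open scoped Classical

noncomputable section

abbrev B₁ := MvPowerSeries (Fin 2) ℚ

/-- The monomial `x^a y^b`. -/
def w (a b : ℕ) : B₁ :=
  MvPowerSeries.monomial (Finsupp.single (0 : Fin 2) a + Finsupp.single (1 : Fin 2) b) 1

/-- Integer powers `f^n` of a power series with constant term 1. -/
def zpowOf (f : B₁) (n : ℤ) : B₁ :=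
  if 0 ≤ n then f ^ n.toNat else (MvPowerSeries.invOfUnit f 1) ^ (-n).toNat

/-- `T_{a,b}(x) = x · (1 + x^a y^b)^{-b}`. -/
def Xab (a b : ℕ) : B₁ :=
  MvPowerSeries.monomial (Finsupp.single (0 : Fin 2) 1) 1 * zpowOf (1 + w a b) (-(b : ℤ))

/-- `T_{a,b}(y) = y · (1 + x^a y^b)^{a}`. -/
def Yab (a b : ℕ) : B₁ :=
  MvPowerSeries.monomial (Finsupp.single (1 : Fin 2) 1) 1 * zpowOf (1 + w a b) (a : ℤ)

/-- The continuous algebra endomorphism `T_{a,b}` of `B₁ = ℚ[[x,y]]` with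
`T_{a,b}(x) = x(1+x^a y^b)^{-b}` and `T_{a,b}(y) = y(1+x^a y^b)^{a}`: on a series it is
given by substituting these values, coefficientwise by a (finite) sum over all
monomials. -/
def Tab (a b : ℕ) (f : B₁) : B₁ :=
  fun c => ∑ᶠ e : Fin 2 →₀ ℕ,
    (MvPowerSeries.coeff e f) * MvPowerSeries.coeff c ((Xab a b) ^ (e 0) * (Yab a b) ^ (e 1))

/-! Each `Tab a b` is the substitution `MvPowerSeries.subst` of the pair `(Xab a b, Yab a b)`, and
a composite of substitutions is the substitution of the composed pair. Both sides therefore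
substitute a single pair, and it suffices to evaluate the two composites on `x` and `y`: both
send `x ↦ x (1 + y + x y)⁻¹` and `y ↦ y (1 + x)`. -/

open MvPowerSeries

namespace MvPowerSeries

variable {σ τ : Type*}

lemma subst_one {R S : Type*} [CommRing R] [CommRing S] [Algebra R S]
    {a : σ → MvPowerSeries τ S} (ha : HasSubst a) : subst a (1 : MvPowerSeries σ R) = 1 := by
  rw [← coe_substAlgHom ha, map_one]

lemma subst_inv {K L : Type*} [Field K] [Field L] [Algebra K L] {a : σ → MvPowerSeries τ L}
    (ha : HasSubst a) {f : MvPowerSeries σ K} (hf : constantCoeff f ≠ 0) :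
    subst a f⁻¹ = (subst a f)⁻¹ := by
  have hunit : IsUnit (subst a f) := by
    rw [← coe_substAlgHom ha]
    exact (isUnit_iff_constantCoeff.2 (IsUnit.mk0 _ hf)).map _
  rw [MvPowerSeries.eq_inv_iff_mul_eq_one (isUnit_iff_constantCoeff.1 hunit).ne_zero,
    ← subst_mul ha, MvPowerSeries.inv_mul_cancel _ hf, subst_one ha]

end MvPowerSeries

lemma zpowOf_natCast (f : B₁) (n : ℕ) : zpowOf f n = f ^ n := by
  simp [zpowOf]

lemma zpowOf_neg_natCast {f : B₁} (hf : constantCoeff f = 1) (n : ℕ) :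
    zpowOf f (-n) = f⁻¹ ^ n := by
  rcases n.eq_zero_or_pos with rfl | hn
  · simp [zpowOf]
  · rw [zpowOf, if_neg (by omega), invOfUnit_eq' f 1 (by simpa using hf)]
    simp

lemma w_eq (a b : ℕ) : w a b = X 0 ^ a * X 1 ^ b := by
  rw [w, X_pow_eq, X_pow_eq, monomial_mul_monomial, one_mul]

lemma Xab_eq (a b : ℕ) : Xab a b = X 0 * (1 + X 0 ^ a * X 1 ^ b)⁻¹ ^ b := by
  rcases b.eq_zero_or_pos with rfl | hb
  · simp [Xab, zpowOf, ← X_def]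
  · rw [Xab, zpowOf_neg_natCast, w_eq, ← X_def]
    simp [w_eq, hb.ne']

lemma Yab_eq (a b : ℕ) : Yab a b = X 1 * (1 + X 0 ^ a * X 1 ^ b) ^ a := by
  rw [Yab, zpowOf_natCast, w_eq, ← X_def]

lemma hasSubst_Xab_Yab (a b : ℕ) : HasSubst ![Xab a b, Yab a b] := by
  refine hasSubst_of_constantCoeff_zero fun i => ?_
  fin_cases i <;> simp [Xab_eq, Yab_eq]

lemma Tab_eq_subst (a b : ℕ) : Tab a b = subst ![Xab a b, Yab a b] := by
  ext f c
  rw [coeff_subst (hasSubst_Xab_Yab a b)]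
  refine finsum_congr fun e => ?_
  rw [Finsupp.prod_fintype _ _ (by simp), Fin.prod_univ_two]
  rfl

lemma Tab_one_zero : Tab 1 0 = subst ![X 0, X 1 * (1 + X 0)] := by
  simp [Tab_eq_subst, Xab_eq, Yab_eq]

lemma Tab_zero_one : Tab 0 1 = subst ![X 0 * (1 + X 1)⁻¹, X 1] := by
  simp [Tab_eq_subst, Xab_eq, Yab_eq]

lemma Tab_one_one : Tab 1 1 = subst ![X 0 * (1 + X 0 * X 1)⁻¹, X 1 * (1 + X 0 * X 1)] := by
  simp [Tab_eq_subst, Xab_eq, Yab_eq]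

/-- The pentagon identity `T_{1,0} ∘ T_{0,1} = T_{0,1} ∘ T_{1,1} ∘ T_{1,0}` for the
Kronecker quiver `K₁`. -/
theorem pentagon_identity (f : B₁) :
    Tab 1 0 (Tab 0 1 f) = Tab 0 1 (Tab 1 1 (Tab 1 0 f)) := by
  have h10 : HasSubst ![(X 0 : B₁), X 1 * (1 + X 0)] :=
    hasSubst_of_constantCoeff_zero (by simp [Fin.forall_fin_two])
  have h01 : HasSubst ![(X 0 : B₁) * (1 + X 1)⁻¹, X 1] :=
    hasSubst_of_constantCoeff_zero (by simp [Fin.forall_fin_two])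
  have h11 : HasSubst ![(X 0 : B₁) * (1 + X 0 * X 1)⁻¹, X 1 * (1 + X 0 * X 1)] :=
    hasSubst_of_constantCoeff_zero (by simp [Fin.forall_fin_two])
  have h0111 := h11.comp h01
  simp only [coe_substAlgHom] at h0111
  rw [Tab_one_zero, Tab_zero_one, Tab_one_one, subst_comp_subst_apply h01 h10,
    subst_comp_subst_apply h11 h01, subst_comp_subst_apply h10 h0111]
  congr 1
  have hu : (1 + X 1) * (1 + X 1 : B₁)⁻¹ = 1 := MvPowerSeries.mul_inv_cancel _ (by simp)
  have hv : (1 + X 0 * (1 + X 1)⁻¹ * X 1) * (1 + X 0 * (1 + X 1 : B₁)⁻¹ * X 1)⁻¹ = 1 :=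
    MvPowerSeries.mul_inv_cancel _ (by simp)
  refine funext (Fin.forall_fin_two.2 ⟨?_, ?_⟩) <;>
    simp only [Matrix.cons_val_zero, Matrix.cons_val_one, subst_X, subst_mul, subst_add, subst_one,
      subst_inv, h10, h01, h0111, map_add, map_mul, constantCoeff_one, constantCoeff_X, mul_zero,
      add_zero, ne_eq, one_ne_zero, not_false_eq_true]
  · rw [mul_assoc, ← MvPowerSeries.mul_inv_rev]
    congr 2
    linear_combination (-(X 0 * X 1 : B₁)) * hu
  · linear_combination (-(X 1 * X 0 * (1 + X 1 : B₁)⁻¹)) * hv - (X 1 * X 0 : B₁) * hu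

end
end
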